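/- Let C(m) := binom(m, ⌊m/2⌋) denote the central binomial coefficient and define f(n,t) := [ (t+1)·C(n−t) + Σ_{ℓ=t+1}^{n} ( ℓ·log₂(ℓ)·C(n−ℓ) + 2·C(n−ℓ) ) ] / C(n). Then f(n,7) < 1 for all integers n ≥ 7. -/
import Mathlib


/-- The central binomial coefficient `C(m) = binom(m, ⌊m/2⌋)`, as a real number. -/
noncomputable def centralBinom (m : ℕ) : ℝ := (Nat.choose m (m / 2) : ℝ)

/-- The quantity `f(n,t)` from Lemma `kozep`. -/
noncomputable def fQuot (n t : ℕ) : ℝ :=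
  (((t : ℝ) + 1) * centralBinom (n - t) +
      ∑ ℓ ∈ Finset.Icc (t + 1) n,
        ((ℓ : ℝ) * Real.logb 2 ℓ * centralBinom (n - ℓ) + 2 * centralBinom (n - ℓ))) /
    centralBinom n

lemma cb_pos (m : ℕ) : 0 < centralBinom m := by
  unfold centralBinom
  exact_mod_cast Nat.choose_pos (Nat.div_le_self m 2)

lemma cb_step_nat {m : ℕ} (hm : 14 ≤ m) :
    15 * Nat.choose m (m / 2) ≤ 8 * Nat.choose (m + 1) ((m + 1) / 2) := by
  rcases Nat.even_or_odd m with ⟨k, hk⟩ | ⟨k, hk⟩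
  · subst hk
    have h2 : (k + k) / 2 = k := by omega
    have h3 : (k + k + 1) / 2 = k := by omega
    rw [h2, h3]
    have hid : (2 * k + 1) * Nat.choose (2 * k) k = Nat.choose (2 * k + 1) (k + 1) * (k + 1) := by
      simpa using Nat.add_one_mul_choose_eq (2 * k) k
    have hsym : Nat.choose (2 * k + 1) (k + 1) = Nat.choose (2 * k + 1) k :=
      Nat.choose_symm_half k
    have h2k : k + k = 2 * k := by ring
    rw [h2k]
    have hk7 : 7 ≤ k := by omega
    -- 15 * choose(2k,k) * (k+1) ≤ 8 * choose(2k+1,k) * (k+1)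
    have key : 15 * Nat.choose (2 * k) k * (k + 1) ≤ 8 * Nat.choose (2 * k + 1) k * (k + 1) := by
      have : 8 * Nat.choose (2 * k + 1) k * (k + 1) = 8 * ((2 * k + 1) * Nat.choose (2 * k) k) := by
        rw [hid, ← hsym]; ring
      rw [this]
      nlinarith [Nat.choose_pos (show k ≤ 2*k by omega)]
    exact Nat.le_of_mul_le_mul_right key (by omega)
  · subst hk
    have h2 : (2 * k + 1) / 2 = k := by omega
    have h3 : (2 * k + 1 + 1) / 2 = k + 1 := by omega
    rw [h2, h3]
    have hp : Nat.choose (2 * k + 2) (k + 1)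
        = Nat.choose (2 * k + 1) k + Nat.choose (2 * k + 1) (k + 1) := by
      exact Nat.choose_succ_succ (2 * k + 1) k ▸ rfl
    have hsym : Nat.choose (2 * k + 1) (k + 1) = Nat.choose (2 * k + 1) k :=
      Nat.choose_symm_half k
    have : Nat.choose (2 * k + 1 + 1) ((k + 1)) = 2 * Nat.choose (2 * k + 1) k := by
      rw [show 2*k+1+1 = 2*k+2 from rfl, hp, hsym]; ring
    rw [this]
    nlinarith [Nat.choose_pos (show k ≤ 2*k+1 by omega)]

lemma cb_step {m : ℕ} (hm : 14 ≤ m) : 15 * centralBinom m ≤ 8 * centralBinom (m + 1) := by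
  unfold centralBinom
  exact_mod_cast cb_step_nat hm

lemma cb_lower {b : ℕ} (hb : 8 ≤ b) : 43 / 100 * (15 / 8 : ℝ) ^ b ≤ centralBinom b := by
  induction b, hb using Nat.le_induction with
  | base => unfold centralBinom; norm_num [Nat.choose]
  | succ b hb ih =>
    by_cases h14 : 14 ≤ b
    · have h1 : 15 * centralBinom b ≤ 8 * centralBinom (b + 1) := cb_step h14
      have : (43 / 100 : ℝ) * (15 / 8) ^ (b + 1) = 15 / 8 * (43 / 100 * (15 / 8) ^ b) := by ring
      rw [this]
      nlinarith
    · interval_cases b <;> (unfold centralBinom; norm_num [Nat.choose])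

lemma cb_upper_small {a : ℕ} (h1 : 1 ≤ a) (h2 : a ≤ 13) :
    centralBinom a ≤ 4 / 7 * (15 / 8 : ℝ) ^ a := by
  interval_cases a <;> (unfold centralBinom; norm_num [Nat.choose])

lemma cb_chain {a : ℕ} (ha : 14 ≤ a) (j : ℕ) :
    centralBinom a * (15 / 8 : ℝ) ^ j ≤ centralBinom (a + j) := by
  induction j with
  | zero => simp
  | succ j ih =>
    have hstep : 15 * centralBinom (a + j) ≤ 8 * centralBinom (a + j + 1) :=
      cb_step (by omega)
    have hpos := cb_pos a
    calc centralBinom a * (15 / 8 : ℝ) ^ (j + 1)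
        = centralBinom a * (15 / 8) ^ j * (15 / 8) := by ring
      _ ≤ centralBinom (a + j) * (15 / 8) := by
          have h158 : (0:ℝ) < 15/8 := by norm_num
          nlinarith [pow_pos (show (0:ℝ) < 15/8 by norm_num) j, cb_pos a]
      _ ≤ centralBinom (a + j + 1) := by nlinarith
      _ = centralBinom (a + (j + 1)) := by ring_nf

lemma cb_div_bound {n a : ℕ} (h1 : 1 ≤ a) (h2 : a ≤ n) (h3 : 8 ≤ n) :
    centralBinom a ≤ 400 / 301 * (8 / 15 : ℝ) ^ (n - a) * centralBinom n := by
  have hsplit : n = a + (n - a) := by omega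
  have hpowid : ((8:ℝ) / 15) ^ (n - a) * (15 / 8) ^ n = (15 / 8) ^ a := by
    calc ((8:ℝ) / 15) ^ (n - a) * (15 / 8) ^ n
        = (8 / 15) ^ (n - a) * ((15 / 8) ^ a * (15 / 8) ^ (n - a)) := by
          rw [show ((15:ℝ)/8) ^ n = (15/8) ^ a * (15/8) ^ (n-a) from by
            rw [← pow_add, ← hsplit]]
      _ = (15 / 8) ^ a * ((8 / 15) * (15 / 8)) ^ (n - a) := by rw [mul_pow]; ring
      _ = (15 / 8) ^ a := by norm_num
  by_cases h13 : a ≤ 13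
  · have hu := cb_upper_small h1 h13
    have hl := cb_lower h3
    calc centralBinom a ≤ 4 / 7 * (15 / 8 : ℝ) ^ a := hu
      _ = 400 / 301 * (8 / 15) ^ (n - a) * (43 / 100 * (15 / 8) ^ n) := by
          rw [show (400:ℝ)/301 * (8/15)^(n-a) * (43/100 * (15/8)^n)
              = (400/301 * (43/100)) * ((8/15)^(n-a) * (15/8)^n) from by ring, hpowid]
          ring
      _ ≤ 400 / 301 * (8 / 15) ^ (n - a) * centralBinom n := by
          have : (0:ℝ) < 400 / 301 * (8 / 15) ^ (n - a) := by positivity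
          nlinarith
  · push_neg at h13
    have hch := cb_chain (show 14 ≤ a by omega) (n - a)
    rw [← hsplit] at hch
    have hp : (0:ℝ) < (15/8:ℝ) ^ (n - a) := by positivity
    have h8 : centralBinom a ≤ (8 / 15 : ℝ) ^ (n - a) * centralBinom n := by
      rw [show ((8:ℝ)/15) = (15/8:ℝ)⁻¹ from by norm_num, inv_pow, ← div_eq_inv_mul,
        le_div_iff₀ hp]
      linarith
    calc centralBinom a ≤ (8 / 15 : ℝ) ^ (n - a) * centralBinom n := h8
      _ ≤ 400 / 301 * (8 / 15) ^ (n - a) * centralBinom n := by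
          nlinarith [cb_pos n, pow_pos (show (0:ℝ) < 8/15 by norm_num) (n - a)]

lemma sq_le_two_pow {l : ℕ} (h : 8 ≤ l) : l ^ 2 ≤ 2 ^ (l - 2) := by
  induction l, h using Nat.le_induction with
  | base => norm_num
  | succ l hl ih =>
    have h1 : (l + 1) ^ 2 ≤ 2 * l ^ 2 := by nlinarith
    have h2 : 2 ^ (l - 2 + 1) = 2 * 2 ^ (l - 2) := by rw [pow_succ]; ring
    have h3 : l + 1 - 2 = l - 2 + 1 := by omega
    rw [h3, h2]
    omega

lemma logb_le_half {l : ℕ} (h : 8 ≤ l) : Real.logb 2 l ≤ ((l : ℝ) - 2) / 2 := by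
  have hl2 : ((l:ℝ)) ^ 2 ≤ (2:ℝ) ^ (l - 2) := by
    exact_mod_cast sq_le_two_pow h
  have hmono : Real.logb 2 ((l:ℝ) ^ 2) ≤ Real.logb 2 ((2:ℝ) ^ (l - 2)) :=
    Real.logb_le_logb_of_le one_lt_two (by positivity) hl2
  rw [Real.logb_pow, Real.logb_pow, Real.logb_self_eq_one one_lt_two] at hmono
  have hcast : ((l - 2 : ℕ) : ℝ) = (l : ℝ) - 2 := by
    have h2 : 2 ≤ l := by omega
    push_cast [h2]; ring
  rw [hcast, mul_one] at hmono
  push_cast at hmono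
  linarith

lemma q_bound {l : ℕ} (h : 8 ≤ l) :
    (l : ℝ) * (((l : ℝ) - 2) / 2) + 2 ≤ 23 / 5 * (5 / 4 : ℝ) ^ l := by
  induction l, h using Nat.le_induction with
  | base => norm_num
  | succ l hl ih =>
    by_cases h10 : 10 ≤ l
    · have hl10 : (10:ℝ) ≤ (l:ℝ) := by exact_mod_cast h10
      have hstep : ((l:ℝ) + 1) * (((l:ℝ) + 1 - 2) / 2) + 2
          ≤ 5 / 4 * ((l : ℝ) * (((l : ℝ) - 2) / 2) + 2) := by nlinarith
      have hpos : (0:ℝ) ≤ 5/4 := by norm_num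
      calc ((l + 1 : ℕ) : ℝ) * ((((l + 1 : ℕ) : ℝ) - 2) / 2) + 2
          = ((l:ℝ) + 1) * (((l:ℝ) + 1 - 2) / 2) + 2 := by push_cast; ring
        _ ≤ 5 / 4 * ((l : ℝ) * (((l : ℝ) - 2) / 2) + 2) := hstep
        _ ≤ 5 / 4 * (23 / 5 * (5 / 4) ^ l) := by linarith
        _ = 23 / 5 * (5 / 4) ^ (l + 1) := by rw [pow_succ]; ring
    · interval_cases l <;> (push_cast; norm_num)

lemma w_bound {l : ℕ} (h : 8 ≤ l) :
    (l : ℝ) * Real.logb 2 l + 2 ≤ 23 / 5 * (5 / 4 : ℝ) ^ l := by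
  have h1 : (l : ℝ) * Real.logb 2 l + 2 ≤ (l : ℝ) * (((l : ℝ) - 2) / 2) + 2 := by
    have := logb_le_half h
    have hl : (0:ℝ) ≤ (l:ℝ) := by positivity
    nlinarith
  exact h1.trans (q_bound h)

open Finset in
lemma geom_id {n : ℕ} (h : 7 ≤ n) :
    ∑ ℓ ∈ Icc 8 n, ((2:ℝ)/3) ^ ℓ = 3 * (2/3) ^ 8 - 3 * (2/3) ^ (n + 1) := by
  induction n, h using Nat.le_induction with
  | base =>
    rw [show Icc 8 7 = (∅ : Finset ℕ) from by decide]
    norm_num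
  | succ n hn ih =>
    rw [Finset.sum_Icc_succ_top (by omega), ih, pow_succ]
    ring

open Finset Real

lemma cb_zero : centralBinom 0 = 1 := by unfold centralBinom; norm_num

lemma logb_two_eight : Real.logb 2 (8:ℝ) = 3 := by
  rw [show (8:ℝ) = 2 ^ (3:ℕ) from by norm_num, Real.logb_pow,
    Real.logb_self_eq_one one_lt_two]
  norm_num

lemma logb_two_nine_le : Real.logb 2 (9:ℝ) ≤ 4 := by
  have h : Real.logb 2 (9:ℝ) ≤ Real.logb 2 (16:ℝ) :=
    Real.logb_le_logb_of_le one_lt_two (by norm_num) (by norm_num)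
  have h16 : Real.logb 2 (16:ℝ) = 4 := by
    rw [show (16:ℝ) = 2 ^ (4:ℕ) from by norm_num, Real.logb_pow,
      Real.logb_self_eq_one one_lt_two]
    norm_num
  linarith

/-- `f(n,7) < 1` for all `n ≥ 7`. -/
theorem stmt_6 (n : ℕ) (hn : 7 ≤ n) : fQuot n 7 < 1 := by
  rw [fQuot, div_lt_one (cb_pos n)]
  by_cases h10 : 10 ≤ n
  · obtain ⟨m, rfl⟩ : ∃ m, n = m + 1 := ⟨n - 1, by omega⟩
    have hm : 9 ≤ m := by omega
    have hCn := cb_pos (m + 1)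
    rw [Finset.sum_Icc_succ_top (show 7 + 1 ≤ m + 1 by omega)]
    have hT1 : centralBinom (m + 1 - 7) ≤ 400/301 * (8/15:ℝ)^7 * centralBinom (m+1) := by
      have h := cb_div_bound (a := m+1-7) (n := m+1) (by omega) (by omega) (by omega)
      rwa [show m + 1 - (m + 1 - 7) = 7 by omega] at h
    have hT2 : ∑ ℓ ∈ Icc (7+1) m,
          ((ℓ:ℝ) * Real.logb 2 ℓ * centralBinom (m+1-ℓ) + 2 * centralBinom (m+1-ℓ))
        ≤ ∑ ℓ ∈ Icc 8 m, (400/301 * (23/5) * (2/3:ℝ)^ℓ * centralBinom (m+1)) := by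
      apply Finset.sum_le_sum
      intro ℓ hℓ
      rw [Finset.mem_Icc] at hℓ
      have hw := w_bound hℓ.1
      have hcb := cb_div_bound (a := m+1-ℓ) (n := m+1) (by omega) (by omega) (by omega)
      rw [show m + 1 - (m + 1 - ℓ) = ℓ by omega] at hcb
      have hlogb : (0:ℝ) ≤ Real.logb 2 ℓ :=
        Real.logb_nonneg one_lt_two (by exact_mod_cast Nat.one_le_iff_ne_zero.mpr (by omega))
      have hwnn : 0 ≤ (ℓ:ℝ) * Real.logb 2 ℓ + 2 := by positivity
      have factored : (ℓ:ℝ) * Real.logb 2 ℓ * centralBinom (m+1-ℓ) + 2 * centralBinom (m+1-ℓ)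
          = ((ℓ:ℝ) * Real.logb 2 ℓ + 2) * centralBinom (m+1-ℓ) := by ring
      rw [factored]
      calc ((ℓ:ℝ) * Real.logb 2 ℓ + 2) * centralBinom (m+1-ℓ)
          ≤ (23/5 * (5/4:ℝ)^ℓ) * (400/301 * (8/15:ℝ)^ℓ * centralBinom (m+1)) :=
            mul_le_mul hw hcb (le_of_lt (cb_pos _)) (by positivity)
        _ = 400/301 * (23/5) * ((5/4) * (8/15):ℝ)^ℓ * centralBinom (m+1) := by
            rw [mul_pow]; ring
        _ = 400/301 * (23/5) * (2/3:ℝ)^ℓ * centralBinom (m+1) := by norm_num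
    have hgeom : ∑ ℓ ∈ Icc 8 m, (400/301 * (23/5) * (2/3:ℝ)^ℓ * centralBinom (m+1))
        = 400/301 * (23/5) * (3*(2/3:ℝ)^8 - 3*(2/3:ℝ)^(m+1)) * centralBinom (m+1) := by
      rw [← geom_id (show 7 ≤ m by omega), Finset.mul_sum, Finset.sum_mul]
    have hT3 : ((m+1 : ℕ):ℝ) * Real.logb 2 ((m+1 : ℕ):ℝ) * centralBinom (m+1-(m+1))
          + 2 * centralBinom (m+1-(m+1))
        ≤ 23/5 * (100/43) * (2/3:ℝ)^(m+1) * centralBinom (m+1) := by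
      rw [show m + 1 - (m+1) = 0 by omega, cb_zero]
      have hw := w_bound (show 8 ≤ m + 1 by omega)
      have hl := cb_lower (show 8 ≤ m + 1 by omega)
      have hkey : (5/4:ℝ)^(m+1) = (2/3:ℝ)^(m+1) * (15/8:ℝ)^(m+1) := by
        rw [← mul_pow]; norm_num
      have hp : (0:ℝ) < (2/3:ℝ)^(m+1) := by positivity
      calc ((m+1 : ℕ):ℝ) * Real.logb 2 ((m+1 : ℕ):ℝ) * 1 + 2 * 1
          = ((m+1 : ℕ):ℝ) * Real.logb 2 ((m+1 : ℕ):ℝ) + 2 := by ring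
        _ ≤ 23/5 * (5/4:ℝ)^(m+1) := hw
        _ = 23/5 * (2/3:ℝ)^(m+1) * (15/8:ℝ)^(m+1) := by rw [hkey]; ring
        _ ≤ 23/5 * (2/3:ℝ)^(m+1) * (100/43 * centralBinom (m+1)) := by
            have h2 : (15/8:ℝ)^(m+1) ≤ 100/43 * centralBinom (m+1) := by linarith
            nlinarith
        _ = 23/5 * (100/43) * (2/3:ℝ)^(m+1) * centralBinom (m+1) := by ring
    set x := (2/3:ℝ)^(m+1) with hxdef
    have hx : 0 ≤ x := by positivity
    have hcoef : 8 * (400/301 * (8/15:ℝ)^7) + 400/301 * (23/5) * (3*(2/3:ℝ)^8 - 3*x)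
        + 23/5 * (100/43) * x < 1 := by
      norm_num
      linarith
    have h78 : ((7:ℕ):ℝ) + 1 = 8 := by norm_num
    rw [h78]
    nlinarith [hT1, hT2.trans_eq hgeom, hT3, hCn, mul_lt_mul_of_pos_right hcoef hCn]
  · interval_cases n
    · rw [show Icc (7+1) 7 = (∅ : Finset ℕ) from by decide]
      unfold centralBinom
      norm_num [Nat.choose]
    · rw [show Icc (7+1) 8 = {8} from by decide, Finset.sum_singleton]
      have h8 : ((8:ℕ):ℝ) = (8:ℝ) := by norm_num
      rw [show (8:ℕ) - (8:ℕ) = 0 by omega, show (8:ℕ) - (7:ℕ) = 1 by omega]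
      rw [h8, logb_two_eight]
      unfold centralBinom
      norm_num [Nat.choose]
    · rw [show Icc (7+1) 9 = {8, 9} from by decide,
        Finset.sum_insert (by decide), Finset.sum_singleton]
      rw [show (9:ℕ) - (8:ℕ) = 1 by omega, show (9:ℕ) - (9:ℕ) = 0 by omega,
        show (9:ℕ) - (7:ℕ) = 2 by omega]
      have h8 : ((8:ℕ):ℝ) = (8:ℝ) := by norm_num
      have h9 : ((9:ℕ):ℝ) = (9:ℝ) := by norm_num
      rw [h8, h9, logb_two_eight]
      have := logb_two_nine_le
      unfold centralBinom
      norm_num [Nat.choose]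
      nlinarith
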